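/- Consider the pursuit–evasion game on the corner-obstacle region X (θ₀ ∈ (0, π/2)) with speed ratio α > 1, zero capture radius, and initial positions x_p0 ≠ x_e0 in X. Define the evader's reachable region R_e as the set of x ∈ X such that there exists an admissible evader control u_e with the property that for every admissible pursuer control u_p there is a time t ∈ [0, t_f(u_p, u_e)) with x_e(t) = x. Then R_e equals the evader's initial dominance region D(x_p0, x_e0) = {x ∈ X : d_L(x, x_p0) − α·d_L(x, x_e0) > 0}. -/

import Mathlib

open MeasureTheory
open scoped ENNReal RealInnerProductSpace

noncomputable section

/-- The Euclidean plane. -/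
abbrev Pt := EuclideanSpace ℝ (Fin 2)

/-- The corner-obstacle game region
`X = {(ρ cos θ, ρ sin θ) : ρ ≥ 0, θ ∈ [θ₀, 2π − θ₀]}`, the complement of an open wedge of
half-angle `θ₀` around the positive x-axis with vertex at the origin. -/
def gameRegion (θ₀ : ℝ) : Set Pt :=
  {x | ∃ ρ θ : ℝ, 0 ≤ ρ ∧ θ ∈ Set.Icc θ₀ (2 * Real.pi - θ₀) ∧
    x = (WithLp.equiv 2 (Fin 2 → ℝ)).symm ![ρ * Real.cos θ, ρ * Real.sin θ]}

open Classical in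
/-- The shortest-path distance on the corner-obstacle region: the Euclidean distance if the
segment joining the two points stays in the region, and the length of the two-segment path
through the origin (the obstacle's vertex) otherwise. -/
def dL (θ₀ : ℝ) (x₁ x₂ : Pt) : ℝ :=
  if segment ℝ x₁ x₂ ⊆ gameRegion θ₀ then ‖x₁ - x₂‖ else ‖x₁‖ + ‖x₂‖

/-- A function is piecewise continuous if on every compact interval it is continuous
except at finitely many points. -/
def PiecewiseContinuous (u : ℝ → Pt) : Prop :=
  ∀ a b : ℝ, ∃ s : Finset ℝ, ∀ t ∈ Set.Icc a b, t ∉ s → ContinuousAt u t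

/-- A control: a piecewise continuous function with `‖u t‖ = 1` for all `t ≥ 0`. -/
def IsControl (u : ℝ → Pt) : Prop :=
  PiecewiseContinuous u ∧ ∀ t : ℝ, 0 ≤ t → ‖u t‖ = 1

/-- The trajectory from `x₀` at speed `v` under control `u`:
`x(t) = x₀ + v·∫₀ᵗ u(s) ds`. -/
def traj (x₀ : Pt) (v : ℝ) (u : ℝ → Pt) (t : ℝ) : Pt :=
  x₀ + v • ∫ s in (0:ℝ)..t, u s

/-- A control admissible from `x₀` at speed `v` in the corner-obstacle region: a control
whose trajectory stays in the region for all `t ≥ 0`. -/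
def Admissible (θ₀ : ℝ) (x₀ : Pt) (v : ℝ) (u : ℝ → Pt) : Prop :=
  IsControl u ∧ ∀ t : ℝ, 0 ≤ t → traj x₀ v u t ∈ gameRegion θ₀

/-- Capture time with capture radius `l`: `inf {t ≥ 0 : ‖x_p(t) − x_e(t)‖ ≤ l}`,
with `inf ∅ = +∞` (valued in `ℝ≥0∞`). -/
def captureTime (l : ℝ) (xp xe : ℝ → Pt) : ℝ≥0∞ :=
  ⨅ t ∈ {t : ℝ | 0 ≤ t ∧ ‖xp t - xe t‖ ≤ l}, ENNReal.ofReal t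

/-- A strategy `δ` is non-anticipative if, for every `t' > 0`, whenever two evader controls
agree almost everywhere on `[0, t']`, the corresponding pursuer controls agree almost
everywhere on `[0, t']`. -/
def Nonanticipative (δ : (ℝ → Pt) → (ℝ → Pt)) : Prop :=
  ∀ t' : ℝ, 0 < t' → ∀ u u' : ℝ → Pt,
    (∀ᵐ t ∂(volume.restrict (Set.Icc (0:ℝ) t')), u t = u' t) →
    (∀ᵐ t ∂(volume.restrict (Set.Icc (0:ℝ) t')), δ u t = δ u' t)

/-!
If `α dL(x, x_e0) ≥ dL(x, x_p0)`, the pursuer runs along a shortest path to `x`, arrives no later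
than the evader's first visit, and waits there; so the evader cannot reach `x` before capture.
Conversely, if `α dL(x, x_e0) < dL(x, x_p0)`, the evader runs along a shortest path to `x`, and a
capture before its arrival would give the pursuer a path to `x` shorter than `dL(x, x_p0)`.

Both directions rest on `dL` being the length of shortest paths in the cone `X`. A path from `a`
to `b` in `X` whose chord leaves `X` at `w` must meet the line `ℝ w` (intermediate value theorem),
hence the ray opposite to `w`; and a broken line `a → c → b` with `c` on that ray has length at
least `‖a‖ + ‖b‖` (Cauchy–Schwarz).
-/

open Set

section Geometry

variable {E : Type*} [NormedAddCommGroup E] [InnerProductSpace ℝ E]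

lemma inner_norm_smul_add_norm_smul_nonneg {a b z : E} (hz : z ∈ segment ℝ a b) :
    0 ≤ ⟪‖b‖ • a + ‖a‖ • b, z⟫ := by
  obtain ⟨s, t, hs, ht, hst, rfl⟩ := hz
  have hab : -(‖a‖ * ‖b‖) ≤ ⟪a, b⟫ := (abs_le.mp (abs_real_inner_le_norm a b)).1
  have expand : ⟪‖b‖ • a + ‖a‖ • b, s • a + t • b⟫ =
      (s * ‖a‖ + t * ‖b‖) * (‖a‖ * ‖b‖ + ⟪a, b⟫) := by
    simp only [inner_add_left, inner_add_right, real_inner_smul_left, real_inner_smul_right,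
      real_inner_self_eq_norm_sq, real_inner_comm a b]
    ring
  rw [expand]
  exact mul_nonneg (by positivity) (by linarith)

lemma norm_add_norm_le_of_mem_segment {a b z : E} (hz : z ∈ segment ℝ a b) {r : ℝ}
    (hr : 0 ≤ r) : ‖a‖ + ‖b‖ ≤ ‖a + r • z‖ + ‖b + r • z‖ := by
  have triangle (y : E) : ‖y‖ ≤ ‖r • z‖ + ‖y + r • z‖ := by
    simpa [add_comm] using norm_sub_le (y + r • z) (r • z)
  rcases eq_or_ne a 0 with rfl | ha
  · simpa using triangle b
  rcases eq_or_ne b 0 with rfl | hb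
  · simpa [add_comm] using triangle a
  have ha' : 0 < ‖a‖ := norm_pos_iff.mpr ha
  have hb' : 0 < ‖b‖ := norm_pos_iff.mpr hb
  have hca : ‖a‖ ^ 2 + r * ⟪a, z⟫ ≤ ‖a‖ * ‖a + r • z‖ := by
    simpa [inner_add_right, real_inner_smul_right, real_inner_self_eq_norm_sq]
      using real_inner_le_norm a (a + r • z)
  have hcb : ‖b‖ ^ 2 + r * ⟪b, z⟫ ≤ ‖b‖ * ‖b + r • z‖ := by
    simpa [inner_add_right, real_inner_smul_right, real_inner_self_eq_norm_sq]
      using real_inner_le_norm b (b + r • z)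
  have hz' := inner_norm_smul_add_norm_smul_nonneg hz
  simp only [inner_add_left, real_inner_smul_left] at hz'
  have key : ‖a‖ * ‖b‖ * (‖a‖ + ‖b‖) ≤ ‖a‖ * ‖b‖ * (‖a + r • z‖ + ‖b + r • z‖) := by
    nlinarith [mul_nonneg hr hz']
  exact le_of_mul_le_mul_left key (mul_pos ha' hb')

end Geometry

lemma exists_eq_smul_of_cross_eq_zero {w x : Pt} (hw : w ≠ 0)
    (h : w 0 * x 1 - w 1 * x 0 = 0) : ∃ k : ℝ, x = k • w := by
  have hw2 : w 0 ^ 2 + w 1 ^ 2 ≠ 0 := by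
    intro h0
    apply hw
    ext i
    fin_cases i <;> simp <;> nlinarith [sq_nonneg (w 0), sq_nonneg (w 1)]
  refine ⟨(x 0 * w 0 + x 1 * w 1) / (w 0 ^ 2 + w 1 ^ 2), ?_⟩
  ext i
  fin_cases i <;> simp <;> field_simp
  · linear_combination (-(w 1)) * h
  · linear_combination (w 0) * h

lemma exists_norm_add_norm_le_dist_add_dist {S : Set Pt}
    (hS : ∀ x ∈ S, ∀ r : ℝ, 0 ≤ r → r • x ∈ S) {p : ℝ → Pt} {s t : ℝ} (hst : s ≤ t)
    (hp : ContinuousOn p (Icc s t)) (hpS : ∀ τ ∈ Icc s t, p τ ∈ S)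
    (hseg : ¬ segment ℝ (p s) (p t) ⊆ S) :
    ∃ c ∈ Icc s t, ‖p s‖ + ‖p t‖ ≤ dist (p s) (p c) + dist (p c) (p t) := by
  obtain ⟨w, hw, hwS⟩ := not_subset.mp hseg
  have hw0 : w ≠ 0 := by
    rintro rfl
    exact hwS (by simpa using hS _ (hpS s ⟨le_rfl, hst⟩) 0 le_rfl)
  -- `φ` vanishes exactly on the line `ℝ w`, and changes sign along the path.
  let φ : Pt →L[ℝ] ℝ := w 0 • EuclideanSpace.proj 1 - w 1 • EuclideanSpace.proj 0
  have hφ : ∀ x, φ x = w 0 * x 1 - w 1 * x 0 := fun x => by simp [φ]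
  have hφ0 : (0 : ℝ) ∈ uIcc (φ (p s)) (φ (p t)) := by
    have := mem_image_of_mem φ.toLinearMap.toAffineMap hw
    rw [image_segment, segment_eq_uIcc] at this
    simpa [hφ, mul_comm] using this
  rw [← uIcc_of_le hst] at hp
  obtain ⟨c, hc, hφc⟩ := intermediate_value_uIcc (φ.continuous.comp_continuousOn hp) hφ0
  rw [uIcc_of_le hst] at hc
  obtain ⟨k, hk⟩ := exists_eq_smul_of_cross_eq_zero hw0 ((hφ _).symm.trans hφc)
  have hk0 : k ≤ 0 := by
    by_contra! hk0
    apply hwS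
    have := hS _ (hpS c hc) k⁻¹ (inv_nonneg.mpr hk0.le)
    rwa [hk, smul_smul, inv_mul_cancel₀ hk0.ne', one_smul] at this
  refine ⟨c, hc, ?_⟩
  have := norm_add_norm_le_of_mem_segment hw (neg_nonneg.mpr hk0)
  rwa [dist_eq_norm, dist_eq_norm, hk, norm_sub_rev (k • w), sub_eq_add_neg, sub_eq_add_neg,
    ← neg_smul]

lemma smul_mem_gameRegion {θ₀ : ℝ} {x : Pt} (hx : x ∈ gameRegion θ₀) {r : ℝ} (hr : 0 ≤ r) :
    r • x ∈ gameRegion θ₀ := by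
  obtain ⟨ρ, θ, hρ, hθ, rfl⟩ := hx
  refine ⟨r * ρ, θ, mul_nonneg hr hρ, hθ, ?_⟩
  ext i
  fin_cases i <;> simp [mul_assoc]

lemma segment_zero_left_subset_gameRegion {θ₀ : ℝ} {b : Pt} (hb : b ∈ gameRegion θ₀) :
    segment ℝ 0 b ⊆ gameRegion θ₀ := by
  rintro _ ⟨s, t, -, ht, -, rfl⟩
  simpa using smul_mem_gameRegion hb ht

lemma exists_unit_ray_subset_gameRegion {θ₀ : ℝ} {x : Pt} (hx : x ∈ gameRegion θ₀) :
    ∃ d : Pt, ‖d‖ = 1 ∧ ∀ s : ℝ, 0 ≤ s → x + s • d ∈ gameRegion θ₀ := by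
  obtain ⟨ρ, θ, hρ, hθ, rfl⟩ := hx
  refine ⟨(WithLp.equiv 2 (Fin 2 → ℝ)).symm ![Real.cos θ, Real.sin θ], ?_, fun s hs => ?_⟩
  · simp [EuclideanSpace.norm_eq, Fin.sum_univ_two]
  · refine ⟨ρ + s, θ, by positivity, hθ, ?_⟩
    ext i
    fin_cases i <;> simp <;> ring

lemma dL_nonneg (θ₀ : ℝ) (x y : Pt) : 0 ≤ dL θ₀ x y := by
  unfold dL
  split_ifs <;> positivity

lemma dL_comm (θ₀ : ℝ) (x y : Pt) : dL θ₀ x y = dL θ₀ y x := by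
  rw [dL, dL, segment_symm, norm_sub_rev, add_comm ‖x‖]

lemma dL_le_of_dist_le {θ₀ : ℝ} {p : ℝ → Pt} {K s t : ℝ} (hst : s ≤ t)
    (hX : ∀ τ ∈ Icc s t, p τ ∈ gameRegion θ₀)
    (hp : ∀ τ ∈ Icc s t, ∀ τ' ∈ Icc s t, dist (p τ) (p τ') ≤ K * dist τ τ') :
    dL θ₀ (p s) (p t) ≤ K * (t - s) := by
  have hs : s ∈ Icc s t := ⟨le_rfl, hst⟩
  have ht : t ∈ Icc s t := ⟨hst, le_rfl⟩
  have hdist : ∀ τ ∈ Icc s t, ∀ τ' ∈ Icc s t, τ ≤ τ' → dist (p τ) (p τ') ≤ K * (τ' - τ) :=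
    fun τ hτ τ' hτ' hle => by
      simpa [Real.dist_eq, abs_of_nonpos (sub_nonpos.mpr hle)] using hp τ hτ τ' hτ'
  unfold dL
  split_ifs with hseg
  · simpa [dist_eq_norm] using hdist s hs t ht hst
  · obtain ⟨c, hc, hle⟩ := exists_norm_add_norm_le_dist_add_dist
      (fun x hx r hr => smul_mem_gameRegion hx hr) hst
      (LipschitzOnWith.of_dist_le' hp).continuousOn hX hseg
    linarith [hdist s hs c hc hc.1, hdist c hc t ht hc.2]

namespace IsControl

variable {u : ℝ → Pt}

lemma intervalIntegrable (hu : IsControl u) {a b : ℝ} (ha : 0 ≤ a) (hab : a ≤ b) :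
    IntervalIntegrable u volume a b := by
  obtain ⟨s, hs⟩ := hu.1 a b
  rw [intervalIntegrable_iff_integrableOn_Ioc_of_le hab]
  have hnull : volume.restrict (Ioc a b) = volume.restrict (Ioc a b \ (s : Set ℝ)) :=
    Measure.restrict_congr_set (sdiff_ae_eq_self.mpr
      (measure_mono_null inter_subset_right (s.finite_toSet.measure_zero _))).symm
  have hcont : ContinuousOn u (Ioc a b \ (s : Set ℝ)) :=
    fun t ht => (hs t (Ioc_subset_Icc_self ht.1) ht.2).continuousWithinAt
  refine ⟨hnull ▸ hcont.aestronglyMeasurable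
    (measurableSet_Ioc.diff s.finite_toSet.measurableSet), ?_⟩
  refine HasFiniteIntegral.of_bounded (C := 1) ?_
  filter_upwards [ae_restrict_mem measurableSet_Ioc] with t ht
  exact (hu.2 t (ha.trans ht.1.le)).le

end IsControl

lemma isControl_const {d : Pt} (hd : ‖d‖ = 1) : IsControl (fun _ => d) :=
  ⟨fun _ _ => ⟨∅, fun _ _ _ => continuousAt_const⟩, fun _ _ => hd⟩

lemma traj_zero (x₀ : Pt) (v : ℝ) (u : ℝ → Pt) : traj x₀ v u 0 = x₀ := by
  simp [traj]

lemma traj_const (x₀ : Pt) (v : ℝ) (d : Pt) (t : ℝ) :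
    traj x₀ v (fun _ => d) t = x₀ + (v * t) • d := by
  simp [traj, smul_smul]

lemma dist_traj_le {u : ℝ → Pt} (hu : IsControl u) (x₀ : Pt) {v : ℝ} (hv : 0 ≤ v) {s t : ℝ}
    (hs : 0 ≤ s) (ht : 0 ≤ t) : dist (traj x₀ v u s) (traj x₀ v u t) ≤ v * dist s t := by
  have hint : ∀ {a}, 0 ≤ a → IntervalIntegrable u volume 0 a := fun ha =>
    (hu.intervalIntegrable le_rfl ha)
  rw [dist_comm, dist_eq_norm, traj, traj, add_sub_add_left_eq_sub, ← smul_sub,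
    intervalIntegral.integral_interval_sub_left (hint ht) (hint hs), norm_smul,
    Real.norm_of_nonneg hv, Real.dist_eq, abs_sub_comm]
  refine mul_le_mul_of_nonneg_left ?_ hv
  simpa using intervalIntegral.norm_integral_le_of_norm_le_const (C := 1) fun r hr =>
    (hu.2 r ((le_min hs ht).trans hr.1.le)).le

lemma continuousOn_traj {u : ℝ → Pt} (hu : IsControl u) (x₀ : Pt) {v : ℝ} (hv : 0 ≤ v) :
    ContinuousOn (traj x₀ v u) (Ici 0) :=
  (LipschitzOnWith.of_dist_le' fun _ hs _ ht => dist_traj_le hu x₀ hv hs ht).continuousOn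

def concatControl (T : ℝ) (u₁ u₂ : ℝ → Pt) : ℝ → Pt := fun t => if t < T then u₁ t else u₂ (t - T)

lemma isControl_concatControl {T : ℝ} {u₁ u₂ : ℝ → Pt} (h₁ : IsControl u₁) (h₂ : IsControl u₂) :
    IsControl (concatControl T u₁ u₂) := by
  refine ⟨fun a b => ?_, fun t ht => ?_⟩
  · obtain ⟨s₁, hs₁⟩ := h₁.1 a b
    obtain ⟨s₂, hs₂⟩ := h₂.1 (a - T) (b - T)
    refine ⟨s₁ ∪ s₂.image (· + T) ∪ {T}, fun t ht hts => ?_⟩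
    simp only [Finset.mem_union, Finset.mem_image, Finset.mem_singleton, not_or,
      not_exists, not_and] at hts
    obtain ⟨⟨hts₁, hts₂⟩, htT⟩ := hts
    rcases lt_or_gt_of_ne htT with hlt | hgt
    · refine (hs₁ t ht hts₁).congr ?_
      filter_upwards [Iio_mem_nhds hlt] with r hr
      simp [concatControl, mem_Iio.mp hr]
    · have hcont : ContinuousAt u₂ (t - T) :=
        hs₂ (t - T) ⟨by linarith [ht.1], by linarith [ht.2]⟩
          fun hmem => hts₂ (t - T) hmem (by ring)
      refine (hcont.comp (f := fun r => r - T) (continuous_sub_right T).continuousAt).congr ?_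
      filter_upwards [Ioi_mem_nhds hgt] with r hr
      simp [concatControl, not_lt.mpr (mem_Ioi.mp hr).le]
  · unfold concatControl
    split_ifs with h
    · exact h₁.2 t ht
    · exact h₂.2 (t - T) (by linarith [not_lt.mp h])

lemma integral_concatControl_left {T : ℝ} {u₁ u₂ : ℝ → Pt} {t : ℝ} (ht : 0 ≤ t) (htT : t ≤ T) :
    ∫ s in (0:ℝ)..t, concatControl T u₁ u₂ s = ∫ s in (0:ℝ)..t, u₁ s := by
  refine intervalIntegral.integral_congr_ae ?_
  rw [uIoc_of_le ht]
  filter_upwards [measure_singleton T |> compl_mem_ae_iff.mpr] with s hsT hs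
  simp [concatControl, lt_of_le_of_ne (hs.2.trans htT) hsT]

lemma traj_concatControl_left {T : ℝ} {u₁ u₂ : ℝ → Pt} (x₀ : Pt) (v : ℝ) {t : ℝ} (ht : 0 ≤ t)
    (htT : t ≤ T) : traj x₀ v (concatControl T u₁ u₂) t = traj x₀ v u₁ t := by
  rw [traj, traj, integral_concatControl_left ht htT]

lemma traj_concatControl_right {T : ℝ} (hT : 0 ≤ T) {u₁ u₂ : ℝ → Pt} (h₁ : IsControl u₁)
    (h₂ : IsControl u₂) (x₀ : Pt) (v : ℝ) {t : ℝ} (ht : T ≤ t) :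
    traj x₀ v (concatControl T u₁ u₂) t = traj (traj x₀ v u₁ T) v u₂ (t - T) := by
  have hc := isControl_concatControl (T := T) h₁ h₂
  have htail : ∫ s in T..t, concatControl T u₁ u₂ s = ∫ s in (0:ℝ)..(t - T), u₂ s := by
    rw [← sub_self T, ← intervalIntegral.integral_comp_sub_right]
    refine intervalIntegral.integral_congr fun s hs => ?_
    rw [uIcc_of_le ht] at hs
    simp [concatControl, not_lt.mpr hs.1]
  rw [traj, ← intervalIntegral.integral_add_adjacent_intervals (hc.intervalIntegrable le_rfl hT)
    (hc.intervalIntegrable hT ht), integral_concatControl_left hT le_rfl, htail, traj, traj,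
    smul_add, add_assoc]

lemma exists_admissible {θ₀ v : ℝ} {x : Pt} (hx : x ∈ gameRegion θ₀) (hv : 0 ≤ v) :
    ∃ u, Admissible θ₀ x v u := by
  obtain ⟨d, hd, hray⟩ := exists_unit_ray_subset_gameRegion hx
  exact ⟨fun _ => d, isControl_const hd, fun t ht => by
    rw [traj_const]; exact hray _ (mul_nonneg hv ht)⟩

lemma dL_traj_le {θ₀ v : ℝ} {x₀ : Pt} {u : ℝ → Pt} (hu : Admissible θ₀ x₀ v u) (hv : 0 ≤ v)
    {s t : ℝ} (hs : 0 ≤ s) (hst : s ≤ t) :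
    dL θ₀ (traj x₀ v u s) (traj x₀ v u t) ≤ v * (t - s) :=
  dL_le_of_dist_le hst (fun τ hτ => hu.2 τ (hs.trans hτ.1))
    fun _ hτ _ hτ' => dist_traj_le hu.1 x₀ hv (hs.trans hτ.1) (hs.trans hτ'.1)

/-- The continuation `u₂` is quantified over so that reachability composes
(`ReachableAt.trans`). -/
def ReachableAt (θ₀ v : ℝ) (a b : Pt) (T : ℝ) : Prop :=
  0 ≤ T ∧ ∀ u₂, Admissible θ₀ b v u₂ →
    ∃ u, Admissible θ₀ a v u ∧ ∀ t, T ≤ t → traj a v u t = traj b v u₂ (t - T)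

namespace ReachableAt

variable {θ₀ v : ℝ} {a b c : Pt} {T₁ T₂ : ℝ}

lemma trans (h₁ : ReachableAt θ₀ v a b T₁) (h₂ : ReachableAt θ₀ v b c T₂) :
    ReachableAt θ₀ v a c (T₁ + T₂) := by
  refine ⟨add_nonneg h₁.1 h₂.1, fun u₃ hu₃ => ?_⟩
  obtain ⟨u₂, hu₂, heq₂⟩ := h₂.2 u₃ hu₃
  obtain ⟨u, hu, heq⟩ := h₁.2 u₂ hu₂
  refine ⟨u, hu, fun t ht => ?_⟩
  rw [heq t (by linarith [h₂.1]), heq₂ _ (by linarith), sub_sub]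

lemma exists_admissible_traj_eq (h : ReachableAt θ₀ v a b T₁) (hb : b ∈ gameRegion θ₀)
    (hv : 0 ≤ v) : ∃ u, Admissible θ₀ a v u ∧ traj a v u T₁ = b := by
  obtain ⟨u₂, hu₂⟩ := exists_admissible hb hv
  obtain ⟨u, hu, heq⟩ := h.2 u₂ hu₂
  exact ⟨u, hu, by rw [heq T₁ le_rfl, sub_self, traj_zero]⟩

end ReachableAt

section Reachability

variable {θ₀ v : ℝ} {a b : Pt}

lemma reachableAt_of_segment_subset (hv : 0 < v) (hab : segment ℝ a b ⊆ gameRegion θ₀) :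
    ReachableAt θ₀ v a b (dist a b / v) := by
  refine ⟨by positivity, fun u₂ hu₂ => ?_⟩
  rcases eq_or_ne a b with rfl | hne
  · exact ⟨u₂, hu₂, fun t _ => by simp⟩
  set L := dist a b
  have hL : 0 < L := dist_pos.mpr hne
  set d : Pt := L⁻¹ • (b - a)
  have hd : ‖d‖ = 1 := by
    rw [norm_smul, ← dist_eq_norm', norm_inv, Real.norm_of_nonneg hL.le, inv_mul_cancel₀ hL.ne']
  have hsegment : ∀ t, 0 ≤ t → t ≤ L / v → traj a v (fun _ => d) t ∈ gameRegion θ₀ := by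
    intro t ht htL
    rw [traj_const]
    refine hab (segment_eq_image' ℝ a b ▸ ⟨v * t / L, ⟨by positivity, ?_⟩, ?_⟩)
    · rwa [div_le_one hL, ← le_div_iff₀' hv]
    · simp only [d, smul_smul, div_eq_mul_inv]
  have hend : traj a v (fun _ => d) (L / v) = b := by
    rw [traj_const, smul_smul, mul_div_cancel₀ _ hv.ne', mul_inv_cancel₀ hL.ne', one_smul,
      add_sub_cancel]
  have hc := isControl_const hd
  refine ⟨concatControl (L / v) (fun _ => d) u₂, ⟨isControl_concatControl hc hu₂.1, fun t ht => ?_⟩,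
    fun t ht => by rw [traj_concatControl_right (by positivity) hc hu₂.1 a v ht, hend]⟩
  rcases le_total t (L / v) with h | h
  · rw [traj_concatControl_left a v ht h]
    exact hsegment t ht h
  · rw [traj_concatControl_right (by positivity) hc hu₂.1 a v h, hend]
    exact hu₂.2 _ (sub_nonneg.mpr h)

lemma reachableAt_dL (hv : 0 < v) (ha : a ∈ gameRegion θ₀) (hb : b ∈ gameRegion θ₀) :
    ReachableAt θ₀ v a b (dL θ₀ a b / v) := by
  unfold dL
  split_ifs with hab
  · simpa [dist_eq_norm] using reachableAt_of_segment_subset hv hab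
  · have := (reachableAt_of_segment_subset hv
      (segment_symm ℝ a 0 ▸ segment_zero_left_subset_gameRegion ha)).trans
      (reachableAt_of_segment_subset hv (segment_zero_left_subset_gameRegion hb))
    simpa [add_div] using this

/-- Going out along a ray and coming back lets the mover idle at a point for any time. -/
lemma reachableAt_self (hv : 0 < v) (ha : a ∈ gameRegion θ₀) {h : ℝ} (hh : 0 ≤ h) :
    ReachableAt θ₀ v a a (h + h) := by
  obtain ⟨d, hd, hray⟩ := exists_unit_ray_subset_gameRegion ha
  set y := a + (v * h) • d
  have hseg : segment ℝ a y ⊆ gameRegion θ₀ := by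
    rw [segment_eq_image']
    rintro _ ⟨r, hr, rfl⟩
    simpa [y, smul_smul] using hray (r * (v * h)) (by have := hr.1; positivity)
  have htime : dist a y / v = h := by
    rw [dist_eq_norm', add_sub_cancel_left, norm_smul, hd, mul_one,
      Real.norm_of_nonneg (by positivity), mul_div_cancel_left₀ _ hv.ne']
  have := (reachableAt_of_segment_subset hv hseg).trans
    (reachableAt_of_segment_subset hv (segment_symm ℝ a y ▸ hseg))
  rwa [dist_comm y a, htime] at this

lemma reachableAt_of_dL_div_le (hv : 0 < v) (ha : a ∈ gameRegion θ₀)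
    (hb : b ∈ gameRegion θ₀) {T : ℝ} (hT : dL θ₀ a b / v ≤ T) : ReachableAt θ₀ v a b T := by
  have := (reachableAt_dL hv ha hb).trans
    (reachableAt_self hv hb (h := (T - dL θ₀ a b / v) / 2) (by linarith))
  convert this using 1
  ring

end Reachability

lemma dL_triangle {θ₀ : ℝ} {a b c : Pt} (ha : a ∈ gameRegion θ₀) (hb : b ∈ gameRegion θ₀)
    (hc : c ∈ gameRegion θ₀) : dL θ₀ a c ≤ dL θ₀ a b + dL θ₀ b c := by
  obtain ⟨u, hu, huc⟩ := ((reachableAt_dL one_pos ha hb).trans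
    (reachableAt_dL one_pos hb hc)).exists_admissible_traj_eq hc zero_le_one
  simp only [div_one] at huc
  simpa [traj_zero, huc] using
    dL_traj_le hu zero_le_one le_rfl (add_nonneg (dL_nonneg θ₀ a b) (dL_nonneg θ₀ b c))

lemma exists_isLeast_hitting_time {E : Type*} [TopologicalSpace E] [T1Space E] {f : ℝ → E}
    (hf : ContinuousOn f (Ici 0)) {x : E} (h : ∃ t, 0 ≤ t ∧ f t = x) :
    ∃ T, IsLeast {t | 0 ≤ t ∧ f t = x} T := by
  have hclosed : IsClosed {t | 0 ≤ t ∧ f t = x} :=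
    hf.preimage_isClosed_of_isClosed isClosed_Ici isClosed_singleton
  exact ⟨_, hclosed.isLeast_csInf h ⟨0, fun _ ht => ht.1⟩⟩

section Capture

variable {xp xe : ℝ → Pt}

lemma captureTime_zero_le {τ : ℝ} (hτ : 0 ≤ τ) (h : xp τ = xe τ) :
    captureTime 0 xp xe ≤ ENNReal.ofReal τ :=
  iInf₂_le τ ⟨hτ, by simp [h]⟩

lemma ofReal_lt_captureTime_zero (hp : ContinuousOn xp (Ici 0)) (he : ContinuousOn xe (Ici 0))
    {T : ℝ} (hT : 0 ≤ T) (h : ∀ τ, 0 ≤ τ → xp τ = xe τ → T < τ) :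
    ENNReal.ofReal T < captureTime 0 xp xe := by
  have hmem : ∀ {t}, t ∈ {t : ℝ | 0 ≤ t ∧ ‖xp t - xe t‖ ≤ 0} → 0 ≤ t ∧ (xp - xe) t = 0 :=
    fun ht => ⟨ht.1, by simpa using ht.2⟩
  by_cases hcap : ∃ τ, 0 ≤ τ ∧ (xp - xe) τ = 0
  · obtain ⟨τ₀, ⟨hτ₀, hcap₀⟩, hleast⟩ := exists_isLeast_hitting_time (hp.sub he) hcap
    calc ENNReal.ofReal T < ENNReal.ofReal τ₀ :=
          (ENNReal.ofReal_lt_ofReal_iff_of_nonneg hT).mpr (h τ₀ hτ₀ (sub_eq_zero.mp hcap₀))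
      _ ≤ captureTime 0 xp xe :=
          le_iInf₂ fun t ht => ENNReal.ofReal_le_ofReal (hleast (hmem ht))
  · have : captureTime 0 xp xe = ⊤ := top_unique <| le_iInf₂ fun t ht => absurd ⟨t, hmem ht⟩ hcap
    rw [this]
    exact ENNReal.ofReal_lt_top

end Capture

section Game

variable {θ₀ α : ℝ} {x_p0 x_e0 x : Pt}

/-- If the evader could be caught on arrival, the pursuer would get to `x` no later than the
evader's first visit and wait for it there. -/
lemma lt_dL_of_forall_reach_before_capture (hα : 0 < α) (hxp : x_p0 ∈ gameRegion θ₀)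
    (hx : x ∈ gameRegion θ₀) {u_e : ℝ → Pt} (hu_e : Admissible θ₀ x_e0 1 u_e)
    (hreach : ∀ u_p, Admissible θ₀ x_p0 α u_p → ∃ t, 0 ≤ t ∧
      ENNReal.ofReal t < captureTime 0 (traj x_p0 α u_p) (traj x_e0 1 u_e) ∧
      traj x_e0 1 u_e t = x) :
    α * dL θ₀ x x_e0 < dL θ₀ x x_p0 := by
  obtain ⟨u₀, hu₀⟩ := exists_admissible hxp hα.le
  obtain ⟨t₀, ht₀, -, hxt₀⟩ := hreach u₀ hu₀
  obtain ⟨T, ⟨hT, hxT⟩, hfirst⟩ := exists_isLeast_hitting_time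
    (continuousOn_traj hu_e.1 x_e0 zero_le_one) ⟨t₀, ht₀, hxt₀⟩
  have hevader : dL θ₀ x x_e0 ≤ T := by
    simpa [traj_zero, hxT, dL_comm θ₀ x_e0] using dL_traj_le hu_e zero_le_one le_rfl hT
  by_contra! hle
  have hpursuer : dL θ₀ x_p0 x / α ≤ T := by
    rw [div_le_iff₀ hα, dL_comm]
    nlinarith
  obtain ⟨u_p, hu_p, hxpT⟩ :=
    (reachableAt_of_dL_div_le hα hxp hx hpursuer).exists_admissible_traj_eq hx hα.le
  obtain ⟨t, ht, hlt, hxt⟩ := hreach u_p hu_p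
  have hcapture := captureTime_zero_le hT (hxpT.trans hxT.symm)
  exact (hlt.trans_le (hcapture.trans (ENNReal.ofReal_le_ofReal (hfirst ⟨ht, hxt⟩)))).false

/-- Along its shortest path the evader reaches `x` at time `T = dL x_e0 x`; a capture at a time
`τ ≤ T` would give the pursuer a path to `x` of length at most `α T`. -/
lemma exists_reach_before_capture_of_lt_dL (hα : 1 ≤ α) (hxp : x_p0 ∈ gameRegion θ₀)
    (hxe : x_e0 ∈ gameRegion θ₀) (hx : x ∈ gameRegion θ₀)
    (hdom : α * dL θ₀ x x_e0 < dL θ₀ x x_p0) :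
    ∃ u_e, Admissible θ₀ x_e0 1 u_e ∧ ∀ u_p, Admissible θ₀ x_p0 α u_p → ∃ t, 0 ≤ t ∧
      ENNReal.ofReal t < captureTime 0 (traj x_p0 α u_p) (traj x_e0 1 u_e) ∧
      traj x_e0 1 u_e t = x := by
  obtain ⟨u_e, hu_e, hxT⟩ :=
    (reachableAt_dL one_pos hxe hx).exists_admissible_traj_eq hx zero_le_one
  rw [div_one] at hxT
  set T := dL θ₀ x_e0 x
  refine ⟨u_e, hu_e, fun u_p hu_p => ⟨T, dL_nonneg θ₀ _ _, ?_, hxT⟩⟩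
  refine ofReal_lt_captureTime_zero (continuousOn_traj hu_p.1 x_p0 (by linarith))
    (continuousOn_traj hu_e.1 x_e0 zero_le_one) (dL_nonneg θ₀ _ _) fun τ hτ hcap => ?_
  by_contra! hτT
  have hpursuer := dL_traj_le hu_p (by linarith) le_rfl hτ
  have hevader := dL_traj_le hu_e zero_le_one hτ hτT
  rw [traj_zero] at hpursuer
  rw [hxT, ← hcap] at hevader
  have := dL_triangle hxp (hu_p.2 τ hτ) hx
  rw [dL_comm θ₀ x x_p0, dL_comm θ₀ x x_e0] at hdom
  nlinarith

end Game

theorem stmt15_general (θ₀ α : ℝ) (hα : 1 < α)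
    (x_p0 x_e0 : Pt) (hxp : x_p0 ∈ gameRegion θ₀) (hxe : x_e0 ∈ gameRegion θ₀) :
    {x : Pt | x ∈ gameRegion θ₀ ∧ ∃ u_e : ℝ → Pt, Admissible θ₀ x_e0 1 u_e ∧
        ∀ u_p : ℝ → Pt, Admissible θ₀ x_p0 α u_p →
          ∃ t : ℝ, 0 ≤ t ∧
            ENNReal.ofReal t < captureTime 0 (traj x_p0 α u_p) (traj x_e0 1 u_e) ∧
            traj x_e0 1 u_e t = x} =
      {x : Pt | x ∈ gameRegion θ₀ ∧ 0 < dL θ₀ x x_p0 - α * dL θ₀ x x_e0} := by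
  ext x
  constructor
  · rintro ⟨hx, u_e, hu_e, hreach⟩
    exact ⟨hx, sub_pos.mpr
      (lt_dL_of_forall_reach_before_capture (by linarith) hxp hx hu_e hreach)⟩
  · rintro ⟨hx, hdom⟩
    exact ⟨hx, exists_reach_before_capture_of_lt_dL hα.le hxp hxe hx (sub_pos.mp hdom)⟩

/-- In the corner-obstacle game (`θ₀ ∈ (0, π/2)`, speed ratio `α > 1`, zero
capture radius, initial positions `x_p0 ≠ x_e0` in `X`), the evader's reachable region —
the set of `x ∈ X` reachable by some admissible evader control before capture against every
admissible pursuer control — equals the evader's initial dominance region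
`D(x_p0, x_e0) = {x ∈ X : d_L(x, x_p0) − α·d_L(x, x_e0) > 0}`. -/
theorem stmt15 (θ₀ α : ℝ) (hθ : θ₀ ∈ Set.Ioo 0 (Real.pi / 2)) (hα : 1 < α)
    (x_p0 x_e0 : Pt) (hxp : x_p0 ∈ gameRegion θ₀) (hxe : x_e0 ∈ gameRegion θ₀)
    (hne : x_p0 ≠ x_e0) :
    {x : Pt | x ∈ gameRegion θ₀ ∧ ∃ u_e : ℝ → Pt, Admissible θ₀ x_e0 1 u_e ∧
        ∀ u_p : ℝ → Pt, Admissible θ₀ x_p0 α u_p →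
          ∃ t : ℝ, 0 ≤ t ∧
            ENNReal.ofReal t < captureTime 0 (traj x_p0 α u_p) (traj x_e0 1 u_e) ∧
            traj x_e0 1 u_e t = x} =
      {x : Pt | x ∈ gameRegion θ₀ ∧ 0 < dL θ₀ x x_p0 - α * dL θ₀ x x_e0} :=
  stmt15_general θ₀ α hα x_p0 x_e0 hxp hxe

end
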